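/- Let T₁, …, Tₙ (n ≥ 2) be distinct equilateral triangles inscribed in the unit circle C, let S be the vertex set of ∩ᵢ Tᵢ, and for ε > 0 let Tᵢ^{(1−ε)} denote Tᵢ scaled by factor (1−ε) about the origin. Let P be the convex hull of all vertices of all Tᵢ^{(1−ε)}. Then there is no triangle T with S ⊆ T ⊆ P. -/

import Mathlib

open Metric

/-- An equilateral triangle inscribed in the unit circle of ℝ², given by its vertices. -/
def InscribedEquilateral (p : Fin 3 → EuclideanSpace ℝ (Fin 2)) : Prop :=
  AffineIndependent ℝ p ∧
  (∀ a, dist (p a) (0 : EuclideanSpace ℝ (Fin 2)) = 1) ∧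
  ∀ a b, a ≠ b → dist (p a) (p b) = dist (p 0) (p 1)

/-!
Each inscribed equilateral triangle contains the disk of radius `1/2` about the origin (the
barycentric coordinates of `x` are `(2⟪x, p b⟫ + 1)/3`), hence so does their intersection `K`.
Since `K` is compact and convex, Krein–Milman shows that a triangle `T` containing the extreme
points `S` of `K` contains `K`, and so the disk. But a triangle containing the disk of radius `r`
about the origin has a vertex of norm at least `2r`: the directions of its three vertices leave an
angular gap of at least `2π/3`, and the unit vector `u` bisecting it satisfies `⟪u, q⟫ ≤ ‖q‖/2` at
every vertex `q`, while `r • u` lies in `T`. A vertex of norm at least `1` cannot lie in `P`, which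
is contained in the ball of radius `1 - ε`.
-/

open Real Set Module Complex
open scoped InnerProductSpace

instance fact_finrank_euclideanSpace_fin_two : Fact (finrank ℝ (EuclideanSpace ℝ (Fin 2)) = 2) :=
  ⟨finrank_euclideanSpace_fin⟩

lemma Real.cos_le_half_of_mem_Icc {x : ℝ} (h₁ : π / 3 ≤ x) (h₂ : x ≤ 5 * π / 3) :
    cos x ≤ 1 / 2 := by
  rw [← cos_pi_div_three]
  rcases le_total x π with h | h
  · exact cos_le_cos_of_nonneg_of_le_pi (by positivity) h h₁
  · rw [← cos_two_pi_sub x]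
    exact cos_le_cos_of_nonneg_of_le_pi (by positivity) (by linarith) (by linarith)

/-- One of the gaps `b - a`, `c - b`, `a + 2π - c` is at least `2π/3`; take `t` at its middle. -/
lemma Real.exists_cos_sub_le_half_of_le {a b c : ℝ} (hab : a ≤ b) (hbc : b ≤ c)
    (hca : c < a + 2 * π) :
    ∃ t, cos (t - a) ≤ 1 / 2 ∧ cos (t - b) ≤ 1 / 2 ∧ cos (t - c) ≤ 1 / 2 := by
  have hπ := pi_pos
  rcases le_or_gt (2 * π / 3) (b - a) with h | h
  · refine ⟨(a + b) / 2, ?_, ?_, ?_⟩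
    · exact cos_le_half_of_mem_Icc (by linarith) (by linarith)
    all_goals
      rw [← cos_neg, neg_sub]
      exact cos_le_half_of_mem_Icc (by linarith) (by linarith)
  rcases le_or_gt (2 * π / 3) (c - b) with h' | h'
  · refine ⟨(b + c) / 2, ?_, ?_, ?_⟩
    · exact cos_le_half_of_mem_Icc (by linarith) (by linarith)
    · exact cos_le_half_of_mem_Icc (by linarith) (by linarith)
    · rw [← cos_neg, neg_sub]
      exact cos_le_half_of_mem_Icc (by linarith) (by linarith)
  · refine ⟨(a + c) / 2 + π, ?_, ?_, ?_⟩ <;>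
      exact cos_le_half_of_mem_Icc (by linarith) (by linarith)

lemma Real.exists_cos_sub_le_half (θ : Fin 3 → ℝ) (hθ : ∀ a, θ a ∈ Ioc (-π) π) :
    ∃ t, ∀ a, cos (t - θ a) ≤ 1 / 2 := by
  have hmono := Tuple.monotone_sort θ
  obtain ⟨t, h₀, h₁, h₂⟩ :=
    exists_cos_sub_le_half_of_le (hmono (show (0 : Fin 3) ≤ 1 by decide))
      (hmono (show (1 : Fin 3) ≤ 2 by decide))
      (by simp only [Function.comp_apply]
          linarith [(hθ (Tuple.sort θ 2)).2, (hθ (Tuple.sort θ 0)).1])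
  refine ⟨t, fun a => ?_⟩
  obtain ⟨k, rfl⟩ := (Tuple.sort θ).surjective a
  fin_cases k <;> assumption

lemma Complex.real_inner_exp_mul_I (t : ℝ) (z : ℂ) :
    ⟪exp (t * I), z⟫_ℝ = ‖z‖ * Real.cos (t - arg z) := by
  rw [Complex.inner, Real.cos_sub]
  simp only [mul_re, conj_re, exp_ofReal_mul_I_re, conj_im, exp_ofReal_mul_I_im, mul_neg,
    sub_neg_eq_add]
  rw [← norm_mul_cos_arg z, ← norm_mul_sin_arg z]
  ring

lemma IsCompact.subset_of_extremePoints_subset {F : Type*} [AddCommGroup F] [Module ℝ F]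
    [TopologicalSpace F] [T2Space F] [IsTopologicalAddGroup F] [ContinuousSMul ℝ F]
    [LocallyConvexSpace ℝ F] {K C : Set F} (hK : IsCompact K) (hKc : Convex ℝ K)
    (hC : IsClosed C) (hCc : Convex ℝ C) (h : K.extremePoints ℝ ⊆ C) : K ⊆ C := by
  rw [← closure_convexHull_extremePoints hK hKc]
  exact closure_minimal (convexHull_min h hCc) hC

section Plane

attribute [local instance] FiniteDimensional.of_fact_finrank_eq_two

variable {E : Type*} [NormedAddCommGroup E] [InnerProductSpace ℝ E]

lemma inner_sum_smul_of_inner_eq {ι : Type*} [Fintype ι] {p : ι → E} {c : ℝ}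
    (hn : ∀ a, ‖p a‖ = 1) (hp : ∀ a b, a ≠ b → ⟪p a, p b⟫_ℝ = c) (g : ι → ℝ) (b : ι) :
    ⟪∑ a, g a • p a, p b⟫_ℝ = (1 - c) * g b + c * ∑ a, g a := by
  classical
  have h : ∀ a, ⟪g a • p a, p b⟫_ℝ = (1 - c) * (if a = b then g a else 0) + c * g a := by
    intro a
    rw [real_inner_smul_left]
    split_ifs with hab
    · rw [hab, real_inner_self_eq_norm_sq, hn]; ring
    · rw [hp a b hab]; ring
  rw [sum_inner, Finset.sum_congr rfl fun a _ => h a, Finset.sum_add_distrib, ← Finset.mul_sum,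
    ← Finset.mul_sum, Finset.sum_ite_eq', if_pos (Finset.mem_univ b)]

lemma sum_eq_zero_of_inner_eq_neg_half {p : Fin 3 → E} (hn : ∀ a, ‖p a‖ = 1)
    (hp : ∀ a b, a ≠ b → ⟪p a, p b⟫_ℝ = -1 / 2) : ∑ a, p a = 0 := by
  have h : ∀ a b, ⟪p a, p b⟫_ℝ = if a = b then 1 else -1 / 2 := fun a b => by
    split_ifs with hab
    · rw [hab, real_inner_self_eq_norm_sq, hn, one_pow]
    · exact hp a b hab
  rw [← inner_self_eq_zero (𝕜 := ℝ)]
  simp only [Fin.sum_univ_three, inner_add_left, inner_add_right, h, Fin.reduceEq]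
  norm_num

/-- Pairing a linear dependence `∑ g a • p a = 0` with each `p b` shows that all `g a` are equal,
and then that `1 + 2c = 0`. -/
lemma inner_eq_neg_half_of_inner_eq [Fact (finrank ℝ E = 2)] {p : Fin 3 → E} {c : ℝ}
    (hn : ∀ a, ‖p a‖ = 1) (hp : ∀ a b, a ≠ b → ⟪p a, p b⟫_ℝ = c) (hc : c ≠ 1) : c = -1 / 2 := by
  have hdep : ¬ LinearIndependent ℝ p := fun hli => by
    simpa [Fact.out (p := finrank ℝ E = 2)] using hli.fintype_card_le_finrank
  obtain ⟨g, hg, i, hi⟩ := Fintype.not_linearIndependent_iff.mp hdep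
  have hg_inner : ∀ b, (1 - c) * g b + c * ∑ a, g a = 0 := fun b => by
    rw [← inner_sum_smul_of_inner_eq hn hp, hg, inner_zero_left]
  have hg_const : ∀ b, g b = g i := fun b => by
    have : (1 - c) * (g b - g i) = 0 := by linarith [hg_inner b, hg_inner i]
    linarith [(mul_eq_zero.1 this).resolve_left (sub_ne_zero.2 hc.symm)]
  have : g i * (1 + 2 * c) = 0 := by
    have := hg_inner i
    rw [Fin.sum_univ_three, hg_const 0, hg_const 1, hg_const 2] at this
    linarith
  linarith [(mul_eq_zero.1 this).resolve_left hi]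

lemma closedBall_half_subset_convexHull [Fact (finrank ℝ E = 2)] {p : Fin 3 → E}
    (hn : ∀ a, ‖p a‖ = 1) (hp : ∀ a b, a ≠ b → ⟪p a, p b⟫_ℝ = -1 / 2) :
    closedBall 0 (1 / 2) ⊆ convexHull ℝ (range p) := by
  intro x hx
  rw [mem_closedBall_zero_iff] at hx
  let w : Fin 3 → ℝ := fun b => (2 * ⟪x, p b⟫_ℝ + 1) / 3
  have hw_nonneg : ∀ b ∈ Finset.univ, 0 ≤ w b := fun b _ => by
    have h := abs_real_inner_le_norm x (p b)
    rw [hn, mul_one] at h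
    have := (abs_le.1 (h.trans hx)).1
    simp only [w]; linarith
  have hw_sum : ∑ b, w b = 1 := by
    have : ∑ b, ⟪x, p b⟫_ℝ = 0 := by
      rw [← inner_sum, sum_eq_zero_of_inner_eq_neg_half hn hp, inner_zero_right]
    simp only [w, Fin.sum_univ_three] at this ⊢
    linarith
  have hli : LinearIndependent ℝ ![p 0, p 1] := by
    refine LinearIndependent.pair_iff.2 fun s t hst => ?_
    have h₀ := congrArg (⟪·, p 0⟫_ℝ) hst
    have h₁ := congrArg (⟪·, p 1⟫_ℝ) hst
    simp only [inner_add_left, real_inner_smul_left, real_inner_self_eq_norm_sq, hn,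
      hp 0 1 (by decide), hp 1 0 (by decide), inner_zero_left] at h₀ h₁
    constructor <;> linarith
  let B := basisOfLinearIndependentOfCardEqFinrank hli
    (by simp [Fact.out (p := finrank ℝ E = 2)])
  have hx_eq : ∑ b, w b • p b = x := by
    have h : ∀ a, ⟪p a, ∑ b, w b • p b⟫_ℝ = ⟪p a, x⟫_ℝ := fun a => by
      rw [real_inner_comm, inner_sum_smul_of_inner_eq hn hp, hw_sum, real_inner_comm]
      simp only [w]
      ring
    refine InnerProductSpace.ext_inner_left_basis B fun i => ?_
    fin_cases i <;> simpa [B] using h _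
  rw [← hx_eq]
  exact (convex_convexHull ℝ _).sum_mem hw_nonneg hw_sum fun b _ =>
    subset_convexHull ℝ _ (mem_range_self b)

lemma exists_norm_eq_one_forall_inner_le_half_norm [Fact (finrank ℝ E = 2)] (q : Fin 3 → E) :
    ∃ u : E, ‖u‖ = 1 ∧ ∀ a, ⟪u, q a⟫_ℝ ≤ ‖q a‖ / 2 := by
  let f : ℂ ≃ₗᵢ[ℝ] E :=
    Complex.isometryOfOrthonormal ((stdOrthonormalBasis ℝ E).reindex (finCongr Fact.out))
  obtain ⟨t, ht⟩ := exists_cos_sub_le_half (fun a => arg (f.symm (q a)))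
    fun a => ⟨neg_pi_lt_arg _, arg_le_pi _⟩
  refine ⟨f (exp (t * I)), by simp [norm_exp_ofReal_mul_I], fun a => ?_⟩
  calc ⟪f (exp (t * I)), q a⟫_ℝ = ⟪exp (t * I), f.symm (q a)⟫_ℝ := by
        rw [← f.inner_map_map, f.apply_symm_apply]
    _ = ‖q a‖ * Real.cos (t - arg (f.symm (q a))) := by
        rw [real_inner_exp_mul_I, LinearIsometryEquiv.norm_map]
    _ ≤ ‖q a‖ * (1 / 2) := mul_le_mul_of_nonneg_left (ht a) (norm_nonneg _)
    _ = ‖q a‖ / 2 := by ring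

lemma exists_two_mul_le_norm_of_closedBall_subset_convexHull [Fact (finrank ℝ E = 2)]
    {q : Fin 3 → E} {r : ℝ} (hr : 0 ≤ r) (h : closedBall 0 r ⊆ convexHull ℝ (range q)) :
    ∃ a, 2 * r ≤ ‖q a‖ := by
  obtain ⟨u, hu, hq⟩ := exists_norm_eq_one_forall_inner_le_half_norm q
  by_contra! hlt
  have hhull : convexHull ℝ (range q) ⊆ {y | ⟪u, y⟫_ℝ < r} :=
    convexHull_min (range_subset_iff.2 fun a => show ⟪u, q a⟫_ℝ < r by linarith [hq a, hlt a])
      (convex_halfSpace_lt (innerₛₗ ℝ u).isLinear r)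
  have hru : r • u ∈ closedBall 0 r := by simp [norm_smul, hu, abs_of_nonneg hr]
  have := hhull (h hru)
  simp [real_inner_smul_right, hu] at this

end Plane

namespace InscribedEquilateral

variable {p : Fin 3 → EuclideanSpace ℝ (Fin 2)} (h : InscribedEquilateral p)
include h

lemma norm_eq_one (a : Fin 3) : ‖p a‖ = 1 := by
  simpa using h.2.1 a

lemma inner_eq_neg_half : ∀ a b, a ≠ b → ⟪p a, p b⟫_ℝ = -1 / 2 := by
  set d := dist (p 0) (p 1)
  have hinner : ∀ a b, a ≠ b → ⟪p a, p b⟫_ℝ = 1 - d ^ 2 / 2 := fun a b hab => by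
    have := norm_sub_sq_real (p a) (p b)
    rw [← dist_eq_norm, h.2.2 a b hab, h.norm_eq_one, h.norm_eq_one] at this
    linarith
  have hd : d ≠ 0 := dist_ne_zero.2 (h.1.injective.ne (by decide))
  have hc : 1 - d ^ 2 / 2 ≠ 1 := by
    intro hc; exact hd (pow_eq_zero_iff two_ne_zero |>.1 (by linarith))
  exact fun a b hab =>
    (hinner a b hab).trans (inner_eq_neg_half_of_inner_eq h.norm_eq_one hinner hc)

lemma closedBall_half_subset_convexHull :
    closedBall 0 (1 / 2) ⊆ convexHull ℝ (range p) :=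
  _root_.closedBall_half_subset_convexHull h.norm_eq_one h.inner_eq_neg_half

end InscribedEquilateral

theorem stmt_16_general {n : ℕ} (hn : 2 ≤ n) (v : Fin n → Fin 3 → EuclideanSpace ℝ (Fin 2))
    (hins : ∀ i, InscribedEquilateral (v i))
    (S : Set (EuclideanSpace ℝ (Fin 2)))
    (hS : S = Set.extremePoints ℝ (⋂ i, convexHull ℝ (Set.range (v i))))
    (ε : ℝ) (hε : 0 < ε) (hε1 : ε < 1)
    (P : Set (EuclideanSpace ℝ (Fin 2)))
    (hP : P = convexHull ℝ (⋃ i, (fun x => (1 - ε) • x) '' Set.range (v i))) :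
    ¬ ∃ q : Fin 3 → EuclideanSpace ℝ (Fin 2), AffineIndependent ℝ q ∧
        S ⊆ convexHull ℝ (Set.range q) ∧ convexHull ℝ (Set.range q) ⊆ P := by
  rintro ⟨q, -, hSq, hqP⟩
  set K := ⋂ i, convexHull ℝ (range (v i))
  have hK_compact : IsCompact K :=
    ((finite_range (v ⟨0, by omega⟩)).isCompact_convexHull (𝕜 := ℝ)).of_isClosed_subset
      (isClosed_iInter fun i => ((finite_range (v i)).isCompact_convexHull (𝕜 := ℝ)).isClosed)
      (iInter_subset _ _)
  have hKq : K ⊆ convexHull ℝ (range q) :=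
    hK_compact.subset_of_extremePoints_subset (convex_iInter fun i => convex_convexHull ℝ _)
      ((finite_range q).isCompact_convexHull (𝕜 := ℝ)).isClosed (convex_convexHull ℝ _)
      (hS ▸ hSq)
  have hball : closedBall 0 (1 / 2) ⊆ K :=
    subset_iInter fun i => (hins i).closedBall_half_subset_convexHull
  obtain ⟨a, ha⟩ :=
    exists_two_mul_le_norm_of_closedBall_subset_convexHull (by norm_num) (hball.trans hKq)
  have hP_ball : P ⊆ closedBall 0 (1 - ε) := by
    rw [hP]
    refine convexHull_min ?_ (convex_closedBall _ _)
    rintro _ ⟨_, ⟨i, rfl⟩, x, ⟨b, rfl⟩, rfl⟩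
    simp [norm_smul, (hins i).norm_eq_one, abs_of_pos (sub_pos.2 hε1)]
  have hqa := hP_ball (hqP (subset_convexHull ℝ _ (mem_range_self a)))
  rw [mem_closedBall_zero_iff] at hqa
  linarith

/-- with T₁, …, Tₙ (n ≥ 2) distinct inscribed equilateral triangles, S the
vertex set of ∩ᵢ Tᵢ, and P the convex hull of the vertices of the triangles scaled by
(1−ε) about the origin (ε > 0), there is no triangle T with S ⊆ T ⊆ P. -/
theorem stmt_16 {n : ℕ} (hn : 2 ≤ n) (v : Fin n → Fin 3 → EuclideanSpace ℝ (Fin 2))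
    (hins : ∀ i, InscribedEquilateral (v i))
    (hdist : ∀ i j, i ≠ j →
      convexHull ℝ (Set.range (v i)) ≠ convexHull ℝ (Set.range (v j)))
    (S : Set (EuclideanSpace ℝ (Fin 2)))
    (hS : S = Set.extremePoints ℝ (⋂ i, convexHull ℝ (Set.range (v i))))
    (ε : ℝ) (hε : 0 < ε) (hε1 : ε < 1)
    (P : Set (EuclideanSpace ℝ (Fin 2)))
    (hP : P = convexHull ℝ (⋃ i, (fun x => (1 - ε) • x) '' Set.range (v i))) :
    ¬ ∃ q : Fin 3 → EuclideanSpace ℝ (Fin 2), AffineIndependent ℝ q ∧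
        S ⊆ convexHull ℝ (Set.range q) ∧ convexHull ℝ (Set.range q) ⊆ P :=
  stmt_16_general hn v hins S hS ε hε hε1 P hP
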